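/- Let A be a domain and B = A^[n] a polynomial ring in n variables over A. Every exponential map δ on B over A of rank 1 is rigid and triangular over A. -/

import Mathlib

open Polynomial

/-- An *exponential map* on a commutative ring `B` over `A`: an `A`-algebra homomorphism
`δ : B → B[t]` such that evaluation at `t = 0` is the identity and
`δ_s ∘ δ_t = δ_{s+t}` (the co-associativity / iterativity condition). -/
structure ExpMap (A : Type*) (B : Type*) [CommRing A] [CommRing B] [Algebra A B] where
  toFun : B →ₐ[A] Polynomial B
  eval_zero : ∀ b : B, (toFun b).eval 0 = b
  coassoc : ∀ b : B,
    (toFun b).map (toFun.toRingHom) =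
      (toFun b).eval₂ (Polynomial.C.comp Polynomial.C)
        (Polynomial.C Polynomial.X + Polynomial.X)

namespace ExpMap

variable {A B : Type*} [CommRing A] [CommRing B] [Algebra A B]

/-- The ring of invariants `B^δ = {x ∈ B | δ(x) = x}`. -/
def invariants (δ : ExpMap A B) : Subalgebra A B where
  carrier := {x : B | δ.toFun x = Polynomial.C x}
  mul_mem' := by
    intro a b ha hb
    simp only [Set.mem_setOf_eq] at *
    rw [map_mul, ha, hb, ← map_mul]
  add_mem' := by
    intro a b ha hb
    simp only [Set.mem_setOf_eq] at *
    rw [map_add, ha, hb, ← map_add]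
  algebraMap_mem' := by
    intro r
    simp only [Set.mem_setOf_eq, AlgHom.commutes, Polynomial.algebraMap_apply]

/-- `δ` is non-trivial if `B^δ ≠ B`. -/
def IsNontrivial (δ : ExpMap A B) : Prop := δ.invariants ≠ ⊤

/-- The iterative higher derivations attached to `δ`: `δ(x) = Σ (D i x) tⁱ`. -/
noncomputable def D (δ : ExpMap A B) (i : ℕ) (x : B) : B := (δ.toFun x).coeff i

/-- A *local slice* of `δ`: an element whose image under `δ` has minimal positive
`t`-degree. -/
def IsLocalSlice (δ : ExpMap A B) (x : B) : Prop :=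
  0 < (δ.toFun x).natDegree ∧
    ∀ y : B, 0 < (δ.toFun y).natDegree → (δ.toFun x).natDegree ≤ (δ.toFun y).natDegree

/-- A *slice* of `δ`: a local slice `x` such that `D n x` is a unit, where
`n = deg_t δ(x)`. -/
def IsSlice (δ : ExpMap A B) (x : B) : Prop :=
  δ.IsLocalSlice x ∧ IsUnit ((δ.toFun x).coeff (δ.toFun x).natDegree)

end ExpMap

/-- `X : Fin n → B` is a *coordinate system* of `B` over `A`, i.e. `B = A[X₁, …, Xₙ]`
is a polynomial ring in the `n` variables `X₁, …, Xₙ` over `A`. -/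
def IsCoordSystem (A : Type*) {B : Type*} [CommRing A] [CommRing B] [Algebra A B]
    {n : ℕ} (X : Fin n → B) : Prop :=
  Function.Bijective (MvPolynomial.aeval (R := A) X)

namespace ExpMap

variable {A B : Type*} [CommRing A] [CommRing B] [Algebra A B]

/-- The *rank* of an exponential map `δ` on `B = A^[n]`: the least `r` such that some
coordinate system `{X₁, …, Xₙ}` satisfies `A[X₁, …, X_{n-r}] ⊆ B^δ`. -/
noncomputable def rank (δ : ExpMap A B) (n : ℕ) : ℕ :=
  sInf {r : ℕ | ∃ X : Fin n → B, IsCoordSystem A X ∧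
    Algebra.adjoin A (X '' {i : Fin n | (i : ℕ) < n - r}) ≤ δ.invariants}

/-- `X ∈ Γ_δ(B)`: a coordinate system with `A[X₁, …, X_{n-r}] ⊆ B^δ` where `r = rank δ`. -/
def InGamma (δ : ExpMap A B) {n : ℕ} (X : Fin n → B) : Prop :=
  IsCoordSystem A X ∧
    Algebra.adjoin A (X '' {i : Fin n | (i : ℕ) < n - δ.rank n}) ≤ δ.invariants

/-- `δ` is *rigid* if the subring `A[X₁, …, X_{n-r}]` does not depend on the choice of
`{X₁, …, Xₙ} ∈ Γ_δ(B)`. -/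
def IsRigid (δ : ExpMap A B) (n : ℕ) : Prop :=
  ∀ X X' : Fin n → B, δ.InGamma X → δ.InGamma X' →
    Algebra.adjoin A (X '' {i : Fin n | (i : ℕ) < n - δ.rank n}) =
      Algebra.adjoin A (X' '' {i : Fin n | (i : ℕ) < n - δ.rank n})

/-- `δ` is *triangular with respect to the coordinate system `X`* over `A`. -/
def IsTriangularWith (δ : ExpMap A B) {n : ℕ} (X : Fin n → B) : Prop :=
  IsCoordSystem A X ∧
    (∀ i : Fin n, ∀ j : ℕ, 0 < j →
      (δ.toFun (X i)).coeff j ∈ Algebra.adjoin A (X '' {l : Fin n | (l : ℕ) < (i : ℕ)})) ∧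
    (∀ i : Fin n, δ.toFun (X i) ≠ Polynomial.C (X i) →
      (∀ l : Fin n, (l : ℕ) < (i : ℕ) → δ.toFun (X l) = Polynomial.C (X l)) →
      δ.IsLocalSlice (X i))

/-- `δ` is *triangular* over `A` (in `n` variables). -/
def IsTriangular (δ : ExpMap A B) (n : ℕ) : Prop :=
  ∃ X : Fin n → B, δ.IsTriangularWith X

/-- `δ` is *triangular over the subring `R`* of `B` (with `B = R^[m]`). -/
def IsTriangularOver (δ : ExpMap A B) (R : Subalgebra A B) (m : ℕ) : Prop :=
  ∃ X : Fin m → B,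
    Function.Bijective (MvPolynomial.aeval (R := ↥R) X) ∧
    (∀ i : Fin m, ∀ j : ℕ, 0 < j →
      (δ.toFun (X i)).coeff j ∈ Algebra.adjoin (↥R) (X '' {l : Fin m | (l : ℕ) < (i : ℕ)})) ∧
    (∀ i : Fin m, δ.toFun (X i) ≠ Polynomial.C (X i) →
      (∀ l : Fin m, (l : ℕ) < (i : ℕ) → δ.toFun (X l) = Polynomial.C (X l)) →
      δ.IsLocalSlice (X i))

end ExpMap

/-!
Let `X` be a coordinate system whose first `n - 1` members are invariant, `C = A[X₁, …, Xₙ₋₁]`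
and `x = Xₙ`, so that `B = C[x]`. Then `δ(p(x)) = p(δ(x))`, whose `t`-degree is
`deg p · deg_t δ(x)`; so `x` is a local slice and every element of `t`-degree below `deg_t δ(x)`
lies in `C`. This applies to the invariants, so `B^δ = C` for every such `X` (rigidity), and,
by `δ_s ∘ δ_t = δ_{s+t}`, to the coefficients of `tʲ` in `δ(x)` for `j > 0` (triangularity).
-/

namespace ExpMap

variable {A B : Type*} [CommRing A] [CommRing B] [Algebra A B] (δ : ExpMap A B)

theorem mem_invariants_iff {b : B} : b ∈ δ.invariants ↔ δ.toFun b = C b := Iff.rfl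

theorem mem_invariants_of_natDegree_eq_zero {b : B} (h : (δ.toFun b).natDegree = 0) :
    b ∈ δ.invariants := by
  rw [mem_invariants_iff, eq_C_of_natDegree_eq_zero h, coeff_zero_eq_eval_zero, δ.eval_zero]

/-- Read off from `δ_s ∘ δ_t = δ_{s+t}` at `tʲ`: `δ(D j b) = Σₑ (e choose j) (D e b) sᵉ⁻ʲ`. -/
theorem natDegree_toFun_coeff_le (b : B) (j : ℕ) :
    (δ.toFun ((δ.toFun b).coeff j)).natDegree ≤ (δ.toFun b).natDegree - j := by
  have hcoeff : δ.toFun ((δ.toFun b).coeff j) = ((δ.toFun b).map δ.toFun.toRingHom).coeff j :=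
    (coeff_map _ _).symm
  rw [hcoeff, δ.coassoc, eval₂_eq_sum, sum_def, finsetSum_coeff]
  refine natDegree_sum_le_of_forall_le _ _ fun e he => ?_
  have hed : e ≤ (δ.toFun b).natDegree := le_natDegree_of_mem_supp e he
  rw [RingHom.comp_apply, coeff_C_mul, add_comm, coeff_X_add_C_pow, ← C_eq_natCast,
    mul_comm, mul_assoc, ← C_mul, mul_comm]
  exact (natDegree_C_mul_X_pow_le _ _).trans (by omega)

section Subalgebra

variable {δ} {C' : Subalgebra A B} (hC : C' ≤ δ.invariants) (x : B)
include hC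

theorem toFun_aeval (p : C'[X]) :
    δ.toFun (aeval x p) = (p.map (algebraMap C' B)).comp (δ.toFun x) := by
  have hδC : (δ.toFun : B →+* B[X]).comp (algebraMap C' B) = C.comp (algebraMap C' B) :=
    RingHom.ext fun c => hC c.2
  rw [aeval_def, ← AlgHom.coe_toRingHom, hom_eval₂, hδC, comp, eval₂_map]

theorem natDegree_toFun_aeval [NoZeroDivisors B] (p : C'[X]) :
    (δ.toFun (aeval x p)).natDegree = p.natDegree * (δ.toFun x).natDegree := by
  rw [toFun_aeval hC, natDegree_comp, natDegree_map_eq_of_injective Subtype.val_injective]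

variable [NoZeroDivisors B] {x} (hx : Function.Surjective (aeval (R := C') x))
include hx

theorem natDegree_toFun_pos (hnt : δ.invariants ≠ ⊤) : 0 < (δ.toFun x).natDegree := by
  refine Nat.pos_of_ne_zero fun h => hnt (eq_top_iff.2 fun b _ => ?_)
  obtain ⟨p, rfl⟩ := hx b
  exact δ.mem_invariants_of_natDegree_eq_zero (by rw [natDegree_toFun_aeval hC, h, mul_zero])

theorem mem_of_natDegree_toFun_lt {b : B}
    (hb : (δ.toFun b).natDegree < (δ.toFun x).natDegree) : b ∈ C' := by
  obtain ⟨p, rfl⟩ := hx b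
  rw [natDegree_toFun_aeval hC] at hb
  obtain ⟨c, rfl⟩ := natDegree_eq_zero.1 (Nat.lt_one_iff.1 (lt_one_of_mul_lt_left hb))
  rw [aeval_C]
  exact c.2

theorem isLocalSlice_of_surjective_aeval (hnt : δ.invariants ≠ ⊤) : δ.IsLocalSlice x := by
  refine ⟨natDegree_toFun_pos hC hx hnt, fun y hy => ?_⟩
  obtain ⟨p, rfl⟩ := hx y
  rw [natDegree_toFun_aeval hC] at hy ⊢
  exact Nat.le_mul_of_pos_left _ (Nat.pos_of_mul_pos_right hy)

theorem invariants_eq_of_surjective_aeval (hnt : δ.invariants ≠ ⊤) : δ.invariants = C' := by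
  refine le_antisymm (fun b hb => mem_of_natDegree_toFun_lt hC hx ?_) hC
  rw [(mem_invariants_iff δ).1 hb, natDegree_C]
  exact natDegree_toFun_pos hC hx hnt

theorem coeff_toFun_mem_of_surjective_aeval (hnt : δ.invariants ≠ ⊤) {j : ℕ} (hj : 0 < j) :
    (δ.toFun x).coeff j ∈ C' :=
  mem_of_natDegree_toFun_lt hC hx <|
    (δ.natDegree_toFun_coeff_le x j).trans_lt (Nat.sub_lt (natDegree_toFun_pos hC hx hnt) hj)

end Subalgebra

end ExpMap

section CoordSystem

variable {A B : Type*} [CommRing A] [CommRing B] [Algebra A B]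

theorem IsCoordSystem.adjoin_range_eq_top {n : ℕ} {X : Fin n → B} (hX : IsCoordSystem A X) :
    Algebra.adjoin A (Set.range X) = ⊤ := by
  rw [Algebra.adjoin_range_eq_range_aeval, AlgHom.range_eq_top]
  exact hX.2

theorem IsCoordSystem.surjective_aeval_last {n : ℕ} {X : Fin n → B} (hX : IsCoordSystem A X)
    (hn : 0 < n) :
    Function.Surjective (aeval (R := Algebra.adjoin A (X '' {i : Fin n | (i : ℕ) < n - 1}))
      (X ⟨n - 1, by omega⟩)) := by
  rw [← AlgHom.range_eq_top, ← Algebra.adjoin_singleton_eq_range_aeval]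
  apply Subalgebra.restrictScalars_injective A
  rw [← Algebra.adjoin_union_eq_adjoin_adjoin, Subalgebra.restrictScalars_top,
    ← hX.adjoin_range_eq_top]
  congr 1
  ext y
  simp only [Set.mem_union, Set.mem_image, Set.mem_setOf_eq, Set.mem_singleton_iff,
    Set.mem_range]
  constructor
  · rintro (⟨i, -, rfl⟩ | rfl) <;> exact ⟨_, rfl⟩
  · rintro ⟨i, rfl⟩
    by_cases hi : (i : ℕ) < n - 1
    · exact Or.inl ⟨i, hi, rfl⟩
    · exact Or.inr (congrArg X (Fin.ext (by simp only; omega)))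

end CoordSystem

namespace ExpMap

variable {A B : Type*} [CommRing A] [CommRing B] [Algebra A B] (δ : ExpMap A B) {n : ℕ}

theorem rank_eq_zero_of_adjoin_range_le {X : Fin n → B} (hX : IsCoordSystem A X)
    (h : Algebra.adjoin A (Set.range X) ≤ δ.invariants) : δ.rank n = 0 := by
  refine Nat.sInf_eq_zero.2 (Or.inl ⟨X, hX, ?_⟩)
  simpa only [Nat.sub_zero, Fin.is_lt, Set.setOf_true, Set.image_univ] using h

theorem exists_isCoordSystem_of_rank_eq_one (hrank : δ.rank n = 1) :
    ∃ X : Fin n → B, IsCoordSystem A X ∧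
      Algebra.adjoin A (X '' {i : Fin n | (i : ℕ) < n - 1}) ≤ δ.invariants :=
  hrank ▸ Nat.sInf_mem (Nat.nonempty_of_pos_sInf (hrank ▸ Nat.one_pos : 0 < δ.rank n))

theorem invariants_ne_top_of_rank_eq_one (hrank : δ.rank n = 1) : δ.invariants ≠ ⊤ := by
  intro htop
  obtain ⟨X, hX, -⟩ := δ.exists_isCoordSystem_of_rank_eq_one hrank
  have := δ.rank_eq_zero_of_adjoin_range_le hX (htop ▸ le_top)
  omega

theorem pos_of_rank_eq_one (hrank : δ.rank n = 1) : 0 < n := by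
  obtain ⟨X, hX, -⟩ := δ.exists_isCoordSystem_of_rank_eq_one hrank
  refine Nat.pos_of_ne_zero fun hn => ?_
  subst hn
  have := δ.rank_eq_zero_of_adjoin_range_le hX (by simp [Set.range_eq_empty])
  omega

variable [NoZeroDivisors B] {δ} {X : Fin n → B} (hn : 0 < n) (hX : IsCoordSystem A X)
  (hXinv : Algebra.adjoin A (X '' {i : Fin n | (i : ℕ) < n - 1}) ≤ δ.invariants)
  (hnt : δ.invariants ≠ ⊤)
include hn hX hXinv hnt

theorem invariants_eq_adjoin_of_le_invariants :
    δ.invariants = Algebra.adjoin A (X '' {i : Fin n | (i : ℕ) < n - 1}) :=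
  invariants_eq_of_surjective_aeval hXinv (hX.surjective_aeval_last hn) hnt

theorem isTriangularWith_of_le_invariants : δ.IsTriangularWith X := by
  have hlast : ∀ i : Fin n, ¬ (i : ℕ) < n - 1 → i = ⟨n - 1, by omega⟩ := fun i hi =>
    Fin.ext (by simp only; omega)
  have hinv : ∀ i : Fin n, (i : ℕ) < n - 1 → δ.toFun (X i) = C (X i) := fun i hi =>
    hXinv (Algebra.subset_adjoin ⟨i, hi, rfl⟩)
  refine ⟨hX, fun i j hj => ?_, fun i hne _ => ?_⟩
  · by_cases hi : (i : ℕ) < n - 1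
    · rw [hinv i hi, coeff_C, if_neg hj.ne']
      exact zero_mem _
    · obtain rfl := hlast i hi
      exact coeff_toFun_mem_of_surjective_aeval hXinv (hX.surjective_aeval_last hn) hnt hj
  · by_cases hi : (i : ℕ) < n - 1
    · exact absurd (hinv i hi) hne
    · obtain rfl := hlast i hi
      exact isLocalSlice_of_surjective_aeval hXinv (hX.surjective_aeval_last hn) hnt

end ExpMap

theorem rank_one_rigid_and_triangular_general
    {A B : Type*} [CommRing A] [CommRing B] [IsDomain B] [Algebra A B]
    {n : ℕ}
    (δ : ExpMap A B) (hrank : δ.rank n = 1) :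
    δ.IsRigid n ∧ δ.IsTriangular n := by
  have hn := δ.pos_of_rank_eq_one hrank
  have hnt := δ.invariants_ne_top_of_rank_eq_one hrank
  obtain ⟨X, hX, hXinv⟩ := δ.exists_isCoordSystem_of_rank_eq_one hrank
  refine ⟨fun Y Y' hY hY' => ?_, X, ExpMap.isTriangularWith_of_le_invariants hn hX hXinv hnt⟩
  rw [ExpMap.InGamma, hrank] at hY hY'
  rw [hrank, ← ExpMap.invariants_eq_adjoin_of_le_invariants hn hY.1 hY.2 hnt,
    ← ExpMap.invariants_eq_adjoin_of_le_invariants hn hY'.1 hY'.2 hnt]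

/-- Let `A` be a domain and `B = A^[n]`. Every exponential map on `B`
over `A` of rank `1` is rigid and triangular over `A`. -/
theorem rank_one_rigid_and_triangular
    {A B : Type*} [CommRing A] [IsDomain A] [CommRing B] [IsDomain B] [Algebra A B]
    (hAB : Function.Injective (algebraMap A B))
    {n : ℕ} (hB : ∃ X : Fin n → B, IsCoordSystem A X)
    (δ : ExpMap A B) (hrank : δ.rank n = 1) :
    δ.IsRigid n ∧ δ.IsTriangular n :=
  rank_one_rigid_and_triangular_general δ hrank
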